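/- For the function δ₁(a) = (2/π) * ( arccosh(1/√(1-a²)) * (1 - a²/2)/(a·√(1 - 1/4 - a²/4)) + 2·sinh( (1/2)·arccosh( (a² + 1/2 - 4)/(1 - 4 + a²) ) ) ) obtained by setting t = 1/2 in the hyp-hor covering density formula δ(C¹_a(t)) = (2/π)·( arccosh(1/√(1-a²))·(1-ta²)/(a·√(2t - t² - a²t²)) + 2·sinh((1/2)·arccosh((2ta² + t - 4)/(2t - 4 + 2ta²))) ), one has lim_{a→0⁺} δ₁(a) = √12/π. -/

import Mathlib

open Real Filter Set

/-- Inverse hyperbolic cosine. -/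
noncomputable def arccosh (x : ℝ) : ℝ := Real.log (x + Real.sqrt (x ^ 2 - 1))

/-- Density of the type-1 hyp-hor covering at `t = 1/2`. -/
noncomputable def delta1 (a : ℝ) : ℝ :=
  (2 / π) * (arccosh (1 / Real.sqrt (1 - a ^ 2)) * (1 - a ^ 2 / 2) /
      (a * Real.sqrt (1 - 1 / 4 - a ^ 2 / 4)) +
    2 * Real.sinh ((1 / 2) * arccosh ((a ^ 2 + 1 / 2 - 4) / (1 - 4 + a ^ 2))))

/-!
Since `cosh (artanh a) = 1 / √(1 - a²)`, the first summand of `delta1 a` is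
`artanh a / a · (1 - a²/2) / √(3/4 - a²/4)`, which tends to `1 · 2/√3` because `artanh' 0 = 1`.
The second summand is continuous at `0`, where it equals `2 sinh (arcosh (7/6) / 2) = 2 √(1/12)`,
by the half-angle formula `cosh (2y) = 1 + 2 sinh² y`. Hence the limit is
`2/π · (2/√3 + 1/√3) = 2√3/π = √12/π`.
-/

open scoped Topology

theorem arccosh_eq_arcosh : arccosh = Real.arcosh := rfl

namespace Real

theorem artanh_eq_half_sub_log {x : ℝ} (hx : x ∈ Ioo (-1) 1) :
    artanh x = (log (1 + x) - log (1 - x)) / 2 := by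
  rw [artanh_eq_half_log (Ioo_subset_Icc_self hx),
    log_div (by linarith [hx.1]) (by linarith [hx.2])]
  ring

theorem hasDerivAt_artanh {x : ℝ} (hx : x ∈ Ioo (-1) 1) :
    HasDerivAt artanh (1 - x ^ 2)⁻¹ x := by
  have h1 : 1 + x ≠ 0 := by linarith [hx.1]
  have h2 : 1 - x ≠ 0 := by linarith [hx.2]
  have hlog := ((((hasDerivAt_id' x).const_add 1).log h1).sub
    (((hasDerivAt_id' x).const_sub 1).log h2)).div_const 2
  refine (hlog.congr_deriv ?_).congr_of_eventuallyEq
    (eventually_of_mem (Ioo_mem_nhds hx.1 hx.2) fun y hy => artanh_eq_half_sub_log hy)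
  rw [show 1 - x ^ 2 = (1 + x) * (1 - x) by ring]
  field_simp
  ring

theorem tendsto_artanh_div_self : Tendsto (fun x => artanh x / x) (𝓝[≠] 0) (𝓝 1) := by
  have h := hasDerivAt_iff_tendsto_slope.mp (hasDerivAt_artanh (x := 0) (by norm_num))
  rw [show ((1 : ℝ) - 0 ^ 2)⁻¹ = 1 by norm_num] at h
  refine h.congr fun x => ?_
  simp [slope_def_field]

theorem arcosh_one_div_sqrt_one_sub_sq {x : ℝ} (hx₀ : 0 ≤ x) (hx₁ : x < 1) :
    arcosh (1 / √(1 - x ^ 2)) = artanh x := by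
  rw [← cosh_artanh ⟨by linarith, hx₁⟩, arcosh_cosh (artanh_nonneg hx₀)]

theorem sinh_half_arcosh {x : ℝ} (hx : 1 ≤ x) : sinh (arcosh x / 2) = √((x - 1) / 2) := by
  have hcosh : cosh (2 * (arcosh x / 2)) = x := by
    rw [mul_div_cancel₀ _ two_ne_zero, cosh_arcosh hx]
  rw [cosh_two_mul, cosh_sq] at hcosh
  rw [show (x - 1) / 2 = sinh (arcosh x / 2) ^ 2 by linarith,
    sqrt_sq (sinh_nonneg_iff.2 (by linarith [arcosh_nonneg hx]))]

end Real

theorem Filter.Tendsto.sinh_half_arcosh {α : Type*} {l : Filter α} {f : α → ℝ} {x : ℝ}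
    (hf : Tendsto f l (𝓝 x)) (hx : 1 < x) :
    Tendsto (fun a => sinh (arcosh (f a) / 2)) l (𝓝 √((x - 1) / 2)) := by
  rw [← Real.sinh_half_arcosh hx.le]
  exact (continuous_sinh.tendsto _).comp
    ((((differentiableAt_arcosh hx).continuousAt.tendsto).comp hf).div_const 2)

theorem sqrt_twelve_div_pi_eq : √12 / π = 2 / π * (2 / √3 + 2 * √((7 / 6 - 1) / 2)) := by
  have h3 : √3 ^ 2 = 3 := sq_sqrt (by norm_num)
  have h12 : √12 = 2 * √3 := by
    rw [show (12 : ℝ) = 2 ^ 2 * 3 by norm_num, sqrt_mul (by norm_num), sqrt_sq (by norm_num)]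
  have h112 : √((7 / 6 - 1) / 2) = √3 / 6 := by
    rw [show ((7 / 6 - 1) / 2 : ℝ) = (√3 / 6) ^ 2 by rw [div_pow, h3]; norm_num,
      sqrt_sq (by positivity)]
  rw [h12, h112]
  field_simp
  nlinarith [h3]

theorem tendsto_delta1_sqrt12_div_pi :
    Tendsto delta1 (nhdsWithin 0 (Ioi 0)) (nhds (Real.sqrt 12 / π)) := by
  have hartanh : Tendsto (fun a => artanh a / a) (𝓝[>] 0) (𝓝 1) :=
    tendsto_artanh_div_self.mono_left (nhdsWithin_mono _ fun _ ha => ne_of_gt ha)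
  have hfactor : Tendsto (fun a : ℝ => (1 - a ^ 2 / 2) / √(1 - 1 / 4 - a ^ 2 / 4)) (𝓝[>] 0)
      (𝓝 (2 / √3)) := by
    have hc : ContinuousAt (fun a : ℝ => (1 - a ^ 2 / 2) / √(1 - 1 / 4 - a ^ 2 / 4)) 0 :=
      ContinuousAt.div (by fun_prop) (by fun_prop) (by norm_num)
    convert hc.tendsto.mono_left nhdsWithin_le_nhds using 2
    norm_num
  have harg : Tendsto (fun a : ℝ => (a ^ 2 + 1 / 2 - 4) / (1 - 4 + a ^ 2)) (𝓝[>] 0)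
      (𝓝 (7 / 6)) := by
    have hc : ContinuousAt (fun a : ℝ => (a ^ 2 + 1 / 2 - 4) / (1 - 4 + a ^ 2)) 0 :=
      ContinuousAt.div (by fun_prop) (by fun_prop) (by norm_num)
    convert hc.tendsto.mono_left nhdsWithin_le_nhds using 2
    norm_num
  rw [sqrt_twelve_div_pi_eq, ← one_mul (2 / √3)]
  refine (((hartanh.mul hfactor).add
    ((harg.sinh_half_arcosh (by norm_num)).const_mul 2)).const_mul (2 / π)).congr' ?_
  filter_upwards [Ioo_mem_nhdsGT one_pos] with a ha
  rw [delta1, arccosh_eq_arcosh, arcosh_one_div_sqrt_one_sub_sq ha.1.le ha.2, mul_div_mul_comm,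
    one_div_mul_eq_div]
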